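/- arXiv:2307.16224 — 5 statements merged into one kernel-verified Lean document; each statement's English description precedes it below -/
import Mathlib

section
/- Let (A_i)_{i ∈ I} be a family of non-zero s-irreducible torsion-free abelian groups with |I| ≥ 2, and let G = ⊕_{i ∈ I} A_i be their direct sum. Then G is s-irreducible if and only if Hom(A_i, A_j) ≠ {0} for all indices i, j ∈ I. -/
/-- A subgroup `S` of an abelian group `G` is *strongly invariant* if every additive
homomorphism `ψ : S →+ G` maps `S` into itself. -/
def IsStronglyInvariant {G : Type*} [AddCommGroup G] (S : AddSubgroup G) : Prop :=
  ∀ (ψ : S →+ G) (s : S), (ψ s : G) ∈ S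

/-- A subgroup `F` of `G` is *fully invariant* if every endomorphism of `G` maps `F` into
itself. -/
def IsFullyInvariant {G : Type*} [AddCommGroup G] (F : AddSubgroup G) : Prop :=
  ∀ (φ : G →+ G), ∀ x ∈ F, φ x ∈ F

/-- A group is *si-simple* if its only strongly invariant subgroups are `⊥` and `⊤`. -/
def SiSimple (G : Type*) [AddCommGroup G] : Prop :=
  ∀ S : AddSubgroup G, IsStronglyInvariant S → S = ⊥ ∨ S = ⊤

/-- A non-zero group `G` is an *ISI-group* if all of its strongly invariant subgroups
different from `⊥` and `⊤` (if any) are isomorphic to one another. -/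
def IsISI (G : Type*) [AddCommGroup G] : Prop :=
  Nontrivial G ∧ ∀ H F : AddSubgroup G, IsStronglyInvariant H → IsStronglyInvariant F →
    H ≠ ⊥ → H ≠ ⊤ → F ≠ ⊥ → F ≠ ⊤ → Nonempty (H ≃+ F)

/-- A non-zero group `G` is a *strongly ISI-group* if all of its non-zero strongly invariant
subgroups are isomorphic to one another. -/
def IsStronglyISI (G : Type*) [AddCommGroup G] : Prop :=
  Nontrivial G ∧ ∀ H F : AddSubgroup G, IsStronglyInvariant H → IsStronglyInvariant F →
    H ≠ ⊥ → F ≠ ⊥ → Nonempty (H ≃+ F)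

/-- A non-zero group `G` is an *IFI-group* if all of its fully invariant subgroups
different from `⊥` and `⊤` (if any) are isomorphic to one another. -/
def IsIFI (G : Type*) [AddCommGroup G] : Prop :=
  Nontrivial G ∧ ∀ H F : AddSubgroup G, IsFullyInvariant H → IsFullyInvariant F →
    H ≠ ⊥ → H ≠ ⊤ → F ≠ ⊥ → F ≠ ⊤ → Nonempty (H ≃+ F)

/-- Multiplication by a natural number `n`, as an endomorphism of `G`. -/
def nsmulHom {G : Type*} [AddCommGroup G] (n : ℕ) : G →+ G where
  toFun x := n • x
  map_zero' := smul_zero n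
  map_add' a b := smul_add n a b

/-- `H` is `n`-pure in `G` if `H ∩ nG = nH`. -/
def IsNPure {G : Type*} [AddCommGroup G] (n : ℕ) (H : AddSubgroup G) : Prop :=
  H ⊓ (nsmulHom (G := G) n).range = H.map (nsmulHom n)

/-- `H` is a pure subgroup of `G` if `H ∩ nG = nH` for every positive natural number `n`. -/
def IsPureSubgroup {G : Type*} [AddCommGroup G] (H : AddSubgroup G) : Prop :=
  ∀ n : ℕ, 0 < n → IsNPure n H

/-- A torsion-free group is *s-irreducible* if it has no pure strongly invariant subgroups
other than `⊥` and `⊤`. -/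
def SIrreducible (G : Type*) [AddCommGroup G] : Prop :=
  ∀ H : AddSubgroup G, IsPureSubgroup H → IsStronglyInvariant H → H = ⊥ ∨ H = ⊤

/-- `Hom(F,G)F = ∑_{φ ∈ Hom(F,G)} φ(F)`, the subgroup generated by all images of
homomorphisms from `F` to `G`. -/
def homGenSub {G : Type*} [AddCommGroup G] (F : AddSubgroup G) : AddSubgroup G :=
  ⨆ φ : F →+ G, φ.range

/-- A group is divisible if `nD = D` for every positive natural number `n`. -/
def IsDivisibleGroup (G : Type*) [AddCommGroup G] : Prop :=
  ∀ n : ℕ, 0 < n → ∀ x : G, ∃ y : G, n • y = x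

/-- The older Mathlib's `AddMonoid.IsTorsionFree` (since removed), with its old meaning:
no non-zero element has finite additive order. -/
def AddMonoid.IsTorsionFree (G : Type*) [AddMonoid G] : Prop :=
  ∀ g : G, g ≠ 0 → ¬IsOfFinAddOrder g


/-- Auxiliary: the pure closure (saturation) of a subgroup. -/
def pureClosureAux {G : Type*} [AddCommGroup G] (D : AddSubgroup G) : AddSubgroup G where
  carrier := {x | ∃ n : ℕ, 0 < n ∧ n • x ∈ D}
  zero_mem' := ⟨1, one_pos, by simpa using D.zero_mem⟩
  add_mem' := by
    rintro a b ⟨n, hn, ha⟩ ⟨m, hm, hb⟩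
    refine ⟨n * m, Nat.mul_pos hn hm, ?_⟩
    rw [smul_add]
    exact D.add_mem (by rw [mul_comm, mul_smul]; exact D.nsmul_mem ha m)
      (by rw [mul_smul]; exact D.nsmul_mem hb n)
  neg_mem' := by
    rintro a ⟨n, hn, ha⟩
    exact ⟨n, hn, by rw [smul_neg]; exact D.neg_mem ha⟩

theorem mem_pureClosureAux {G : Type*} [AddCommGroup G] (D : AddSubgroup G) (x : G) :
    x ∈ pureClosureAux D ↔ ∃ n : ℕ, 0 < n ∧ n • x ∈ D := Iff.rfl

theorem pureClosureAux_le {G : Type*} [AddCommGroup G] (D : AddSubgroup G) :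
    D ≤ pureClosureAux D := fun d hd => ⟨1, one_pos, by simpa using hd⟩

theorem pureClosureAux_pure {G : Type*} [AddCommGroup G] (D : AddSubgroup G) :
    IsPureSubgroup (pureClosureAux D) := by
  intro n hn
  apply le_antisymm
  · rintro x ⟨⟨m, hm, hmx⟩, y, hy⟩
    refine ⟨y, ⟨m * n, Nat.mul_pos hm hn, ?_⟩, hy⟩
    have hxy : n • y = x := hy
    rw [mul_smul, hxy]
    exact hmx
  · rintro x ⟨y, ⟨m, hm, hmy⟩, rfl⟩
    refine ⟨⟨m, hm, ?_⟩, ⟨y, rfl⟩⟩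
    show m • (n • y) ∈ D
    rw [smul_comm]
    exact D.nsmul_mem hmy n

theorem trace_si {M G : Type*} [AddCommGroup M] [AddCommGroup G] :
    IsStronglyInvariant (pureClosureAux (⨆ φ : M →+ G, φ.range)) := by
  intro ψ s
  rcases s.2 with ⟨n, hn, hns⟩
  refine ⟨n, hn, ?_⟩
  have key : ∀ d (hd : d ∈ ⨆ φ : M →+ G, φ.range),
      ψ ⟨d, pureClosureAux_le _ hd⟩ ∈ ⨆ φ : M →+ G, φ.range := by
    intro d hd
    refine AddSubgroup.iSup_induction' (S := fun φ : M →+ G => φ.range)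
      (C := fun x hx => ψ ⟨x, pureClosureAux_le _ hx⟩ ∈ ⨆ φ : M →+ G, φ.range)
      ?_ ?_ ?_ hd
    · rintro φ x ⟨a, rfl⟩
      have hr : ∀ b, φ b ∈ pureClosureAux (⨆ φ : M →+ G, φ.range) := fun b =>
        pureClosureAux_le _ (le_iSup (fun φ : M →+ G => φ.range) φ ⟨b, rfl⟩)
      exact le_iSup (fun χ : M →+ G => χ.range)
        (ψ.comp (φ.codRestrict _ hr)) ⟨a, rfl⟩
    · have h0 : ψ 0 ∈ ⨆ φ : M →+ G, φ.range := by
        rw [map_zero]; exact AddSubgroup.zero_mem _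
      exact h0
    · intro x y hx hy hCx hCy
      have h2 := AddSubgroup.add_mem _ hCx hCy
      rw [← map_add] at h2
      exact h2
  have h1 := key (n • (s : G)) hns
  have heq : (⟨n • (s : G), pureClosureAux_le _ hns⟩ :
      pureClosureAux (⨆ φ : M →+ G, φ.range)) = n • s := Subtype.ext (by simp)
  rw [heq, map_nsmul] at h1
  exact h1

theorem trace_eval_zero {M G N : Type*} [AddCommGroup M] [AddCommGroup G] [AddCommGroup N]
    (g : G →+ N) (hg : ∀ φ : M →+ G, g.comp φ = 0) :
    ∀ d ∈ ⨆ φ : M →+ G, φ.range, g d = 0 := by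
  intro d hd
  refine AddSubgroup.iSup_induction' (S := fun φ : M →+ G => φ.range)
    (C := fun x _ => g x = 0) ?_ (map_zero g) ?_ hd
  · rintro φ x ⟨a, rfl⟩
    have h : g.comp φ = 0 := hg φ
    calc g (φ a) = (g.comp φ) a := rfl
    _ = (0 : M →+ N) a := by rw [h]
    _ = 0 := rfl
  · intro x y hx hy h1 h2
    rw [map_add, h1, h2, add_zero]


open DirectSum in
/-- The direct sum of at least two non-zero s-irreducible torsion-free abelian groups
`A i` is s-irreducible iff `Hom(A i, A j) ≠ 0` for all `i, j`. -/
theorem statement15 {ι : Type*} [Nontrivial ι] (A : ι → Type*)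
    [∀ i, AddCommGroup (A i)] [∀ i, Nontrivial (A i)]
    (htf : ∀ i, AddMonoid.IsTorsionFree (A i)) (hirr : ∀ i, SIrreducible (A i)) :
    SIrreducible (⨁ i, A i) ↔ ∀ i j, ∃ f : A i →+ A j, f ≠ 0 := by
  classical
  -- evaluation homomorphisms
  let ev : ∀ k, (⨁ l, A l) →+ A k := fun k =>
    { toFun := fun x => x k
      map_zero' := rfl
      map_add' := fun a b => by simp }
  have ev_of : ∀ k (a : A k), ev k (DirectSum.of A k a) = a := fun k a =>
    DirectSum.of_eq_same k a
  have of_ne : ∀ k (a : A k), a ≠ 0 → DirectSum.of A k a ≠ 0 := by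
    intro k a ha h0
    apply ha
    rw [← ev_of k a, h0, map_zero]
  constructor
  · -- forward direction
    intro hG i j
    by_contra hne
    push_neg at hne
    have hzero : ∀ f : A i →+ A j, f = 0 := hne
    have hDj : ∀ d ∈ ⨆ φ : A i →+ ⨁ k, A k, φ.range, ev j d = 0 :=
      trace_eval_zero (ev j) (fun φ => hzero _)
    rcases hG (pureClosureAux (⨆ φ : A i →+ ⨁ k, A k, φ.range))
      (pureClosureAux_pure _) trace_si with hb | ht
    · rcases exists_ne (0 : A i) with ⟨a, ha⟩
      have hmem : DirectSum.of A i a ∈ pureClosureAux (⨆ φ : A i →+ ⨁ k, A k, φ.range) :=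
        pureClosureAux_le _
          (le_iSup (fun φ : A i →+ ⨁ k, A k => φ.range) (DirectSum.of A i) ⟨a, rfl⟩)
      rw [hb, AddSubgroup.mem_bot] at hmem
      exact of_ne i a ha hmem
    · rcases exists_ne (0 : A j) with ⟨b, hbne⟩
      have hmem : DirectSum.of A j b ∈ pureClosureAux (⨆ φ : A i →+ ⨁ k, A k, φ.range) := by
        rw [ht]; trivial
      rcases hmem with ⟨n, hn, hd⟩
      have h0 : ev j (n • DirectSum.of A j b) = 0 := hDj _ hd
      rw [map_nsmul, ev_of] at h0
      exact (htf j) b hbne (isOfFinAddOrder_iff_nsmul_eq_zero.mpr ⟨n, hn, h0⟩)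
  · -- reverse direction
    intro hhom H hpure hsi
    rcases eq_or_ne H ⊥ with hbot | hbot
    · exact Or.inl hbot
    right
    have comp_mem : ∀ x ∈ H, ∀ k, DirectSum.of A k (x k) ∈ H := by
      intro x hx k
      exact hsi ((DirectSum.of A k).comp ((ev k).comp H.subtype)) ⟨x, hx⟩
    set Hk : ∀ k, AddSubgroup (A k) := fun k => H.comap (DirectSum.of A k) with hHk
    have mem_Hk : ∀ k (x : ⨁ l, A l), x ∈ H → x k ∈ Hk k := fun k x hx => comp_mem x hx k
    have hsik : ∀ k, IsStronglyInvariant (Hk k) := by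
      intro k ψ s
      let e : H →+ Hk k :=
        { toFun := fun x => ⟨(x : ⨁ l, A l) k, mem_Hk k x x.2⟩
          map_zero' := rfl
          map_add' := fun a b => by ext; simp }
      have hs : DirectSum.of A k (s : A k) ∈ H := s.2
      have := hsi (((DirectSum.of A k).comp ψ).comp e) ⟨_, hs⟩
      have he : e ⟨_, hs⟩ = s := by
        ext
        exact DirectSum.of_eq_same k (s : A k)
      show DirectSum.of A k (ψ s) ∈ H
      rw [← he]
      exact this
    have hpk : ∀ k, IsPureSubgroup (Hk k) := by
      intro k n hn
      apply le_antisymm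
      · rintro a ⟨haH, b, hb⟩
        have h1 : DirectSum.of A k a ∈ H ⊓ (nsmulHom (G := ⨁ l, A l) n).range := by
          refine ⟨haH, DirectSum.of A k b, ?_⟩
          show n • DirectSum.of A k b = DirectSum.of A k a
          rw [← map_nsmul]
          exact congrArg (DirectSum.of A k) hb
        rw [hpure n hn] at h1
        rcases h1 with ⟨h, hhH, hh⟩
        refine ⟨h k, mem_Hk k h hhH, ?_⟩
        show n • (h k) = a
        calc n • h k = ev k (n • h) := (map_nsmul (ev k) n h).symm
        _ = ev k (DirectSum.of A k a) := by rw [show (n • h : ⨁ l, A l) = _ from hh]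
        _ = a := ev_of k a
      · rintro a ⟨b, hbH, rfl⟩
        refine ⟨?_, ⟨b, rfl⟩⟩
        show DirectSum.of A k (n • b) ∈ H
        rw [map_nsmul]
        exact H.nsmul_mem hbH n
    have hk : ∀ k, Hk k = ⊥ ∨ Hk k = ⊤ := fun k => hirr k (Hk k) (hpk k) (hsik k)
    -- find a nonzero component
    have hex : ∃ i0, Hk i0 = ⊤ := by
      by_contra hno
      push_neg at hno
      apply hbot
      rw [AddSubgroup.eq_bot_iff_forall]
      intro x hx
      refine DFinsupp.ext fun k => ?_
      rw [DFinsupp.zero_apply]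
      have h1 : Hk k = ⊥ := (hk k).resolve_right (hno k)
      have := mem_Hk k x hx
      rw [h1, AddSubgroup.mem_bot] at this
      simpa using this
    rcases hex with ⟨i0, hi0⟩
    have htop : ∀ k, Hk k = ⊤ := by
      intro k
      rcases hhom i0 k with ⟨f, hf⟩
      have ⟨a, ha⟩ : ∃ a, f a ≠ 0 := by
        by_contra hc
        push_neg at hc
        exact hf (AddMonoidHom.ext fun a => hc a)
      have haH : DirectSum.of A i0 a ∈ H := by
        have : a ∈ Hk i0 := by rw [hi0]; trivial
        exact this
      have := hsi ((DirectSum.of A k).comp (f.comp ((ev i0).comp H.subtype))) ⟨_, haH⟩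
      have h2 : DirectSum.of A k (f a) ∈ H := by
        have h3 : ev i0 (DirectSum.of A i0 a) = a := ev_of i0 a
        simpa [h3] using this
      rcases hk k with hb | ht
      · exfalso
        have : f a ∈ Hk k := h2
        rw [hb, AddSubgroup.mem_bot] at this
        exact ha this
      · exact ht
    rw [eq_top_iff]
    intro x hxtop
    clear hxtop
    induction x using DirectSum.induction_on with
    | zero => exact H.zero_mem
    | of k a =>
        have : a ∈ Hk k := by rw [htop k]; trivial
        exact this
    | add x y hx hy => exact H.add_mem hx hy
end

section
/- Let (A_i)_{i ∈ I} be a family of non-zero si-simple abelian groups with |I| ≥ 2, and let G = ⊕_{i ∈ I} A_i be their direct sum. Then G is si-simple if and only if Hom(A_i, A_j) ≠ {0} for all indices i, j ∈ I. -/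
open DirectSum in
/-- The direct sum of at least two non-zero si-simple abelian groups `A i` is si-simple
iff `Hom(A i, A j) ≠ 0` for all `i, j`. -/
theorem statement16 {ι : Type*} [Nontrivial ι] (A : ι → Type*)
    [∀ i, AddCommGroup (A i)] [∀ i, Nontrivial (A i)]
    (hsimple : ∀ i, SiSimple (A i)) :
    SiSimple (⨁ i, A i) ↔ ∀ i j, ∃ f : A i →+ A j, f ≠ 0 := by
  classical
  set G := ⨁ i, A i with hG
  let π : ∀ k, G →+ A k := fun k => DFinsupp.evalAddMonoidHom k
  have hπof : ∀ k (a : A k), π k (of A k a) = a := fun k a => DirectSum.of_eq_same k a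
  have hπ : ∀ k (x : G), π k x = x k := fun _ _ => rfl
  have hofne : ∀ k (a : A k), a ≠ 0 → of A k a ≠ 0 := by
    intro k a ha h0
    apply ha
    have := congrArg (π k) h0
    rwa [hπof, map_zero] at this
  constructor
  · intro hGsimple i j
    by_contra hcon
    push_neg at hcon
    set S : AddSubgroup G := ⨆ φ : A i →+ G, φ.range with hSdef
    have hle : ∀ φ : A i →+ G, φ.range ≤ S := fun φ => le_iSup (fun φ : A i →+ G => φ.range) φ
    have hSI : IsStronglyInvariant S := by
      intro ψ s
      have key : S ≤ (AddSubgroup.comap ψ S).map S.subtype := by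
        refine le_trans hSdef.le (iSup_le fun φ => ?_)
        rintro _ ⟨a, rfl⟩
        have hmem : φ a ∈ S := hle φ ⟨a, rfl⟩
        refine ⟨⟨φ a, hmem⟩, ?_, rfl⟩
        show ψ ⟨φ a, hmem⟩ ∈ S
        have hco : ψ ⟨φ a, hmem⟩ =
            (ψ.comp (φ.codRestrict S (fun b => hle φ ⟨b, rfl⟩))) a := rfl
        rw [hco]
        exact hle _ ⟨a, rfl⟩
      obtain ⟨t, ht, hts⟩ := key s.2
      have : t = s := Subtype.ext hts
      rwa [this] at ht
    rcases hGsimple S hSI with hbot | htop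
    · obtain ⟨a, ha⟩ := exists_ne (0 : A i)
      have : of A i a ∈ S := hle (of A i) ⟨a, rfl⟩
      rw [hbot, AddSubgroup.mem_bot] at this
      exact hofne i a ha this
    · obtain ⟨b, hb⟩ := exists_ne (0 : A j)
      have hmem : of A j b ∈ S := htop ▸ AddSubgroup.mem_top _
      have hker : S ≤ (π j).ker := by
        rw [hSdef]
        refine iSup_le fun φ => ?_
        rintro _ ⟨a, rfl⟩
        have : (π j).comp φ = 0 := hcon _
        have := congrArg (fun f : A i →+ A j => f a) this
        simpa using this
      have := hker hmem
      rw [AddMonoidHom.mem_ker, hπof] at this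
      exact hb this
  · intro hhom S hS
    by_cases hbot : S = ⊥
    · exact Or.inl hbot
    right
    let Si : ∀ k, AddSubgroup (A k) := fun k => AddSubgroup.comap (of A k) S
    have proj_mem : ∀ k (s : G), s ∈ S → of A k (s k) ∈ S := by
      intro k s hs
      have := hS ((of A k).comp ((π k).comp S.subtype)) ⟨s, hs⟩
      simpa [hπ] using this
    have si_inv : ∀ k, IsStronglyInvariant (Si k) := by
      intro k ψ s
      obtain ⟨a, ha⟩ := s
      have ha' : of A k a ∈ S := ha
      let ρ : S →+ Si k := AddMonoidHom.mk'
        (fun s => ⟨(s : G) k, proj_mem k _ s.2⟩)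
        (by
          intro x y
          apply Subtype.ext
          simp [DFinsupp.add_apply])
      have hres := hS ((of A k).comp (ψ.comp ρ)) ⟨of A k a, ha'⟩
      have hρ : ρ ⟨of A k a, ha'⟩ = ⟨a, ha⟩ := Subtype.ext (DirectSum.of_eq_same k a)
      rw [AddMonoidHom.comp_apply, AddMonoidHom.comp_apply, hρ] at hres
      exact hres
    have si_top : ∀ k, Si k ≠ ⊥ → ∀ a : A k, of A k a ∈ S := by
      intro k hk a
      rcases hsimple k (Si k) (si_inv k) with h | h
      · exact absurd h hk
      · have : a ∈ Si k := h ▸ AddSubgroup.mem_top a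
        exact this
    -- find a nonzero element of S
    have : ∃ x ∈ S, x ≠ (0 : G) := by
      by_contra h
      push_neg at h
      exact hbot ((AddSubgroup.eq_bot_iff_forall S).2 h)
    obtain ⟨x, hxS, hx0⟩ := this
    have : ∃ k, x k ≠ 0 := by
      by_contra h
      push_neg at h
      exact hx0 (DFinsupp.ext h)
    obtain ⟨k, hk⟩ := this
    have hSk : Si k ≠ ⊥ := by
      intro h
      have : x k ∈ Si k := proj_mem k x hxS
      rw [h, AddSubgroup.mem_bot] at this
      exact hk this
    have hkS : ∀ a : A k, of A k a ∈ S := si_top k hSk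
    have hall : ∀ j (a : A j), of A j a ∈ S := by
      intro j a
      obtain ⟨f, hf⟩ := hhom k j
      have : ∃ b, f b ≠ 0 := by
        by_contra h
        push_neg at h
        exact hf (AddMonoidHom.ext h)
      obtain ⟨b, hb⟩ := this
      have h1 := hS ((of A j).comp (f.comp ((π k).comp S.subtype))) ⟨of A k b, hkS b⟩
      have hmem : of A j (f (π k (of A k b))) ∈ S := by simpa using h1
      rw [hπof] at hmem
      have hSj : Si j ≠ ⊥ := by
        intro h
        have : f b ∈ Si j := hmem
        rw [h, AddSubgroup.mem_bot] at this
        exact hb this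
      exact si_top j hSj a
    rw [eq_top_iff]
    intro y _
    refine DirectSum.induction_on y S.zero_mem (fun m a => hall m a) fun a b ha hb => S.add_mem ha hb
end

section
/- Let G be a non-zero abelian group and let m be an index set with |m| ≥ 2, and let G^(m) = ⊕_m G denote the direct sum of m copies of G. If G is si-simple, then G^(m) is si-simple; if G is an s-irreducible torsion-free group, then G^(m) is s-irreducible; and if G is an ISI-group, then G^(m) is an ISI-group. -/
open DirectSum

namespace St17

variable {G : Type*} [AddCommGroup G] {m : Type*} [DecidableEq m]

/-- Evaluation at `i` as an additive hom. -/
def evalHom (i : m) : (⨁ _ : m, G) →+ G where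
  toFun x := x i
  map_zero' := rfl
  map_add' a b := DFinsupp.add_apply a b i

@[simp] lemma evalHom_apply (i : m) (x : ⨁ _ : m, G) : evalHom (G := G) i x = x i := rfl

variable {S : AddSubgroup (⨁ _ : m, G)}

lemma coord_mem (hS : IsStronglyInvariant S) (j₀ : m) {x : ⨁ _ : m, G} (hx : x ∈ S) (i : m) :
    DirectSum.of (fun _ : m => G) j₀ (x i) ∈ S := by
  have := hS ((DirectSum.of (fun _ : m => G) j₀).comp ((evalHom i).comp S.subtype)) ⟨x, hx⟩
  exact this

lemma of_mem_trans (hS : IsStronglyInvariant S) {j₀ : m} {g : G}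
    (hg : DirectSum.of (fun _ : m => G) j₀ g ∈ S) (i : m) :
    DirectSum.of (fun _ : m => G) i g ∈ S := by
  have := hS ((DirectSum.of (fun _ : m => G) i).comp ((evalHom j₀).comp S.subtype)) ⟨_, hg⟩
  simpa [DirectSum.of_eq_same] using this

lemma mem_iff (hS : IsStronglyInvariant S) (j₀ : m) (x : ⨁ _ : m, G) :
    x ∈ S ↔ ∀ i, x i ∈ S.comap (DirectSum.of (fun _ : m => G) j₀) := by
  constructor
  · exact fun hx i => coord_mem hS j₀ hx i
  · intro h
    classical
    rw [← DirectSum.sum_support_of x]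
    exact S.sum_mem fun i _ => of_mem_trans hS (h i) i

lemma H_si (hS : IsStronglyInvariant S) (j₀ : m) :
    IsStronglyInvariant (S.comap (DirectSum.of (fun _ : m => G) j₀)) := by
  set H := S.comap (DirectSum.of (fun _ : m => G) j₀) with hH
  intro ψ s
  have hmem : ∀ t : S, (t : ⨁ _ : m, G) j₀ ∈ H := fun t => coord_mem hS j₀ t.2 j₀
  set θ : S →+ H := AddMonoidHom.codRestrict ((evalHom j₀).comp S.subtype) H hmem with hθ
  have := hS ((DirectSum.of (fun _ : m => G) j₀).comp (ψ.comp θ)) ⟨_, s.2⟩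
  have hθs : θ ⟨DirectSum.of (fun _ : m => G) j₀ (s : G), s.2⟩ = s := by
    apply Subtype.ext
    show (DirectSum.of (fun _ : m => G) j₀ (s : G)) j₀ = s
    exact DirectSum.of_eq_same _ _
  rw [AddMonoidHom.comp_apply, AddMonoidHom.comp_apply, hθs] at this
  exact this

lemma bot_iff (hS : IsStronglyInvariant S) (j₀ : m) :
    S = ⊥ ↔ S.comap (DirectSum.of (fun _ : m => G) j₀) = ⊥ := by
  constructor
  · intro h
    rw [h]
    ext g
    simp only [AddSubgroup.mem_comap, AddSubgroup.mem_bot, DirectSum.of,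
      DFinsupp.singleAddHom_apply, DFinsupp.single_eq_zero]
    exact DFinsupp.single_eq_zero
  · intro h
    ext x
    simp only [AddSubgroup.mem_bot]
    constructor
    · intro hx
      refine DFinsupp.ext fun i => ?_
      have : x i ∈ S.comap (DirectSum.of (fun _ : m => G) j₀) := coord_mem hS j₀ hx i
      rw [h] at this
      simpa using this
    · rintro rfl; exact S.zero_mem

lemma top_iff (hS : IsStronglyInvariant S) (j₀ : m) :
    S = ⊤ ↔ S.comap (DirectSum.of (fun _ : m => G) j₀) = ⊤ := by
  constructor
  · intro h; rw [h]; rfl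
  · intro h
    ext x
    simp only [AddSubgroup.mem_top, iff_true]
    rw [mem_iff hS j₀]
    intro i
    rw [h]
    trivial

lemma npure (hS : IsStronglyInvariant S) (j₀ : m) {n : ℕ} (hn : IsNPure n S) :
    IsNPure n (S.comap (DirectSum.of (fun _ : m => G) j₀)) := by
  set H := S.comap (DirectSum.of (fun _ : m => G) j₀) with hHdef
  ext h
  simp only [AddSubgroup.mem_inf, AddMonoidHom.mem_range, AddSubgroup.mem_map]
  constructor
  · rintro ⟨hh, g, hg⟩
    have hg' : n • g = h := hg
    have h1 : DirectSum.of (fun _ : m => G) j₀ h ∈ S := hh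
    have h2 : DirectSum.of (fun _ : m => G) j₀ h
        ∈ S ⊓ (nsmulHom (G := ⨁ _ : m, G) n).range := by
      refine ⟨h1, DirectSum.of (fun _ : m => G) j₀ g, ?_⟩
      show n • DirectSum.of (fun _ : m => G) j₀ g = DirectSum.of (fun _ : m => G) j₀ h
      rw [← map_nsmul, hg']
    rw [hn] at h2
    obtain ⟨s, hs, hsh⟩ := h2
    refine ⟨s j₀, coord_mem hS j₀ hs j₀, ?_⟩
    show n • s j₀ = h
    have hns : n • s = DirectSum.of (fun _ : m => G) j₀ h := hsh
    have : (n • s) j₀ = (DirectSum.of (fun _ : m => G) j₀ h) j₀ := by rw [hns]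
    rw [DirectSum.of_eq_same] at this
    rw [← this]
    exact ((evalHom (G := G) j₀).map_nsmul n s).symm
  · rintro ⟨g, hg, hgh⟩
    have hgh' : n • g = h := hgh
    refine ⟨?_, g, hgh⟩
    rw [← hgh']
    exact AddSubgroup.nsmul_mem H hg n

def Phi (H : AddSubgroup G) : (⨁ _ : m, ↥H) →+ ⨁ _ : m, G :=
  toAddMonoid fun i => (DirectSum.of (fun _ : m => G) i).comp H.subtype

lemma Phi_apply (H : AddSubgroup G) (x : ⨁ _ : m, ↥H) (i : m) :
    (Phi H x) i = (x i : G) := by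
  induction x using DirectSum.induction_on with
  | zero => simp
  | of j h =>
      rw [Phi, toAddMonoid_of]
      rcases eq_or_ne j i with rfl | hne
      · simp [DirectSum.of_eq_same]
      · simp [DirectSum.of_eq_of_ne _ _ _ hne.symm]
  | add a b ha hb =>
      rw [map_add, DFinsupp.add_apply, DFinsupp.add_apply, ha, hb,
        AddSubgroup.coe_add]

lemma Phi_injective (H : AddSubgroup G) : Function.Injective (Phi (m := m) H) := by
  intro x y hxy
  refine DFinsupp.ext fun i => Subtype.ext ?_
  rw [← Phi_apply, ← Phi_apply, hxy]

lemma Phi_range {H : AddSubgroup G} {S : AddSubgroup (⨁ _ : m, G)}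
    (hiff : ∀ x : ⨁ _ : m, G, x ∈ S ↔ ∀ i, x i ∈ H) :
    (Phi (m := m) H).range = S := by
  ext x
  constructor
  · rintro ⟨y, rfl⟩
    rw [hiff]
    intro i
    rw [Phi_apply]
    exact (y i).2
  · intro hx
    classical
    refine ⟨∑ i ∈ x.support, DirectSum.of (fun _ : m => ↥H) i ⟨x i, (hiff x).1 hx i⟩, ?_⟩
    rw [map_sum]
    have : ∀ i ∈ x.support,
        Phi H (DirectSum.of (fun _ : m => ↥H) i ⟨x i, (hiff x).1 hx i⟩)
          = DirectSum.of (fun _ : m => G) i (x i) := by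
      intro i _
      rw [Phi, toAddMonoid_of]
      rfl
    rw [Finset.sum_congr rfl this, DirectSum.sum_support_of]

noncomputable def equivDS {H : AddSubgroup G} {S : AddSubgroup (⨁ _ : m, G)}
    (hiff : ∀ x : ⨁ _ : m, G, x ∈ S ↔ ∀ i, x i ∈ H) :
    ↥S ≃+ ⨁ _ : m, ↥H :=
  ((AddMonoidHom.ofInjective (Phi_injective H)).trans
    (AddEquiv.addSubgroupCongr (Phi_range hiff))).symm

end St17

open DirectSum in

/-- For a non-zero abelian group `G` and an index set `m` with at least two elements, the
direct sum `G^(m)` inherits si-simplicity, s-irreducibility (in the torsion-free case) and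
the ISI property from `G`. -/
theorem statement17 {G : Type*} [AddCommGroup G] [Nontrivial G]
    {m : Type*} [Nontrivial m] :
    (SiSimple G → SiSimple (⨁ _ : m, G)) ∧
    (AddMonoid.IsTorsionFree G → SIrreducible G → SIrreducible (⨁ _ : m, G)) ∧
    (IsISI G → IsISI (⨁ _ : m, G)) := by
  classical
  obtain ⟨j₀⟩ : Nonempty m := inferInstance
  have hnt : Nontrivial (⨁ _ : m, G) := by
    obtain ⟨g, hg⟩ := exists_ne (0 : G)
    refine ⟨DirectSum.of (fun _ : m => G) j₀ g, 0, fun h => hg ?_⟩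
    have := congrArg (fun z : ⨁ _ : m, G => z j₀) h
    simpa [DirectSum.of_eq_same] using this
  refine ⟨?_, ?_, ?_⟩
  · intro hG S hS
    rcases hG (S.comap (DirectSum.of (fun _ : m => G) j₀)) (St17.H_si hS j₀) with h | h
    · exact Or.inl ((St17.bot_iff hS j₀).2 h)
    · exact Or.inr ((St17.top_iff hS j₀).2 h)
  · intro _ hG S hpure hS
    have hHpure : IsPureSubgroup (S.comap (DirectSum.of (fun _ : m => G) j₀)) :=
      fun n hn => St17.npure hS j₀ (hpure n hn)
    rcases hG _ hHpure (St17.H_si hS j₀) with h | h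
    · exact Or.inl ((St17.bot_iff hS j₀).2 h)
    · exact Or.inr ((St17.top_iff hS j₀).2 h)
  · rintro ⟨-, hG⟩
    refine ⟨hnt, ?_⟩
    intro S₁ S₂ hS₁ hS₂ hb₁ ht₁ hb₂ ht₂
    set H₁ := S₁.comap (DirectSum.of (fun _ : m => G) j₀) with hH₁
    set H₂ := S₂.comap (DirectSum.of (fun _ : m => G) j₀) with hH₂
    obtain ⟨e⟩ : Nonempty (↥H₁ ≃+ ↥H₂) :=
      hG H₁ H₂ (St17.H_si hS₁ j₀) (St17.H_si hS₂ j₀)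
        (fun h => hb₁ ((St17.bot_iff hS₁ j₀).2 h))
        (fun h => ht₁ ((St17.top_iff hS₁ j₀).2 h))
        (fun h => hb₂ ((St17.bot_iff hS₂ j₀).2 h))
        (fun h => ht₂ ((St17.top_iff hS₂ j₀).2 h))
    have e₁ : ↥S₁ ≃+ ⨁ _ : m, ↥H₁ := St17.equivDS (St17.mem_iff hS₁ j₀)
    have e₂ : ↥S₂ ≃+ ⨁ _ : m, ↥H₂ := St17.equivDS (St17.mem_iff hS₂ j₀)
    have emid : (⨁ _ : m, ↥H₁) ≃+ ⨁ _ : m, ↥H₂ :=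
      DFinsupp.mapRange.addEquiv fun _ : m => e
    exact ⟨(e₁.trans emid).trans e₂.symm⟩
end

section
/- For a non-zero abelian group G, the following three conditions are equivalent: (a) G is a strongly ISI-group; (b) Hom(F,G)F = G for every non-zero subgroup F of G; (c) G is si-simple. -/

lemma le_homGenSub {G : Type*} [AddCommGroup G] (F : AddSubgroup G) : F ≤ homGenSub F := by
  have h := le_iSup (fun φ : F →+ G => φ.range) F.subtype
  simpa [homGenSub] using h

lemma homGenSub_si {G : Type*} [AddCommGroup G] (F : AddSubgroup G) :
    IsStronglyInvariant (homGenSub F) := by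
  intro ψ s
  have hmem : ∀ (φ : F →+ G) (a : F), φ a ∈ homGenSub F :=
    fun φ a => le_iSup (fun φ : F →+ G => φ.range) φ ⟨a, rfl⟩
  have htop : (⊤ : AddSubgroup (homGenSub F)) =
      ⨆ φ : F →+ G, (φ.codRestrict (homGenSub F) (hmem φ)).range := by
    apply AddSubgroup.map_injective (homGenSub F).subtype_injective
    rw [AddSubgroup.map_iSup]
    have h1 : AddSubgroup.map (homGenSub F).subtype ⊤ = homGenSub F := by
      rw [← AddMonoidHom.range_eq_map, AddSubgroup.range_subtype]
    rw [h1]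
    have h2 : ∀ φ : F →+ G,
        AddSubgroup.map (homGenSub F).subtype (φ.codRestrict (homGenSub F) (hmem φ)).range
          = φ.range := by
      intro φ
      rw [← AddMonoidHom.range_comp]
      exact congrArg AddMonoidHom.range (AddMonoidHom.ext fun x => rfl)
    simp only [h2]
    rfl
  have key : ψ.range ≤ homGenSub F := by
    rw [AddMonoidHom.range_eq_map, htop, AddSubgroup.map_iSup]
    refine iSup_le fun φ => ?_
    rw [← AddMonoidHom.range_comp]
    exact le_iSup (fun φ : F →+ G => φ.range) _
  exact key ⟨s, rfl⟩

lemma si_simple_of_stronglyISI {G : Type*} [AddCommGroup G] [Nontrivial G]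
    (h : IsStronglyISI G) : SiSimple G := by
  intro S hS
  by_cases hSbot : S = ⊥
  · exact Or.inl hSbot
  · right
    have htop_si : IsStronglyInvariant (⊤ : AddSubgroup G) := fun ψ s => trivial
    have htopne : (⊤ : AddSubgroup G) ≠ ⊥ := by
      obtain ⟨y, hy⟩ := exists_ne (0 : G)
      intro h
      exact hy ((AddSubgroup.eq_bot_iff_forall _).mp h y trivial)
    obtain ⟨e⟩ := h.2 S ⊤ hS htop_si hSbot htopne
    set ψ : S →+ G := (AddSubgroup.topEquiv).toAddMonoidHom.comp e.toAddMonoidHom with hψ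
    have hsurj : Function.Surjective ψ := by
      intro x
      obtain ⟨s, hs⟩ := e.surjective ⟨x, trivial⟩
      exact ⟨s, by simp [hψ, hs]⟩
    rw [eq_top_iff]
    intro x _
    obtain ⟨s, rfl⟩ := hsurj x
    exact hS ψ s

/-- For a non-zero abelian group `G` the following are equivalent: (a) `G` is a strongly
ISI-group; (b) `Hom(F,G)F = G` for every non-zero subgroup `F`; (c) `G` is si-simple. -/
theorem statement18 {G : Type*} [AddCommGroup G] [Nontrivial G] :
    (IsStronglyISI G ↔ ∀ F : AddSubgroup G, F ≠ ⊥ → homGenSub F = ⊤) ∧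
    ((∀ F : AddSubgroup G, F ≠ ⊥ → homGenSub F = ⊤) ↔ SiSimple G) := by
  have hbc : (∀ F : AddSubgroup G, F ≠ ⊥ → homGenSub F = ⊤) ↔ SiSimple G := by
    constructor
    · intro hb S hS
      by_cases hSbot : S = ⊥
      · exact Or.inl hSbot
      · right
        have hle : homGenSub S ≤ S := by
          refine iSup_le fun φ => ?_
          rintro x ⟨s, rfl⟩
          exact hS φ s
        have := hb S hSbot
        exact top_le_iff.mp (this ▸ hle)
    · intro hc F hF
      rcases hc (homGenSub F) (homGenSub_si F) with h | h
      · exact absurd (eq_bot_iff.mpr (h ▸ le_homGenSub F)) hF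
      · exact h
  refine ⟨?_, hbc⟩
  constructor
  · intro ha
    exact hbc.mpr (si_simple_of_stronglyISI ha)
  · intro hb
    have hc := hbc.mp hb
    refine ⟨‹_›, fun H F hH hF hHbot hFbot => ?_⟩
    have h1 : H = ⊤ := (hc H hH).resolve_left hHbot
    have h2 : F = ⊤ := (hc F hF).resolve_left hFbot
    subst h1; subst h2
    exact ⟨AddEquiv.refl _⟩
end

section
/- Every torsion-free IFI-group is si-simple. -/
/-!
A strongly invariant subgroup `S` is fully invariant, and any isomorphism `S ≃+ G`, read as a
homomorphism `S →+ G`, must map `S` into itself; hence `S = G`. If the torsion-free group `G` is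
not divisible, some `nG` is a proper non-zero fully invariant subgroup isomorphic to `G`, so the
IFI property makes every proper non-zero fully invariant subgroup isomorphic to `G`. If `G` is
divisible it is injective, so for `0 ≠ s ∈ S` every `x ∈ G` is the image of `s` under some
`S →+ G`, extending `k • s ↦ k • x` from the infinite cyclic group `⟨s⟩`.
-/

section

variable {G : Type*} [AddCommGroup G]

theorem IsStronglyInvariant.isFullyInvariant {S : AddSubgroup G} (hS : IsStronglyInvariant S) :
    IsFullyInvariant S :=
  fun φ x hx => hS (φ.comp S.subtype) ⟨x, hx⟩

theorem IsStronglyInvariant.eq_top_of_addEquiv {S : AddSubgroup G} (hS : IsStronglyInvariant S)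
    (e : S ≃+ G) : S = ⊤ :=
  (AddSubgroup.eq_top_iff' S).2 fun x => by simpa using hS e.toAddMonoidHom (e.symm x)

theorem IsStronglyInvariant.eq_top_of_divisibleBy [DivisibleBy G ℤ] [IsAddTorsionFree G]
    {S : AddSubgroup G} (hS : IsStronglyInvariant S) (hS₀ : S ≠ ⊥) : S = ⊤ := by
  obtain ⟨s, hs⟩ := (AddSubgroup.ne_bot_iff_exists_ne_zero).1 hS₀
  refine (AddSubgroup.eq_top_iff' S).2 fun x => ?_
  obtain ⟨ψ, hψ⟩ := (Module.Baer.of_divisible G).extension_property_addMonoidHom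
    (zmultiplesHom S s) (smul_left_injective ℤ hs) (zmultiplesHom G x)
  have hψs : ψ s = x := by simpa using DFunLike.congr_fun hψ 1
  simpa [hψs] using hS ψ s

theorem isFullyInvariant_range_nsmulHom (n : ℕ) : IsFullyInvariant (nsmulHom (G := G) n).range := by
  rintro φ _ ⟨y, rfl⟩
  exact ⟨φ y, (map_nsmul φ n y).symm⟩

noncomputable def addEquivRangeNsmulHom [IsAddTorsionFree G] {n : ℕ} (hn : n ≠ 0) :
    G ≃+ (nsmulHom (G := G) n).range :=
  AddMonoidHom.ofInjective (IsAddTorsionFree.nsmul_right_injective hn)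

theorem range_nsmulHom_ne_bot [IsAddTorsionFree G] [Nontrivial G] {n : ℕ} (hn : n ≠ 0) :
    (nsmulHom (G := G) n).range ≠ ⊥ := by
  obtain ⟨g, hg⟩ := exists_ne (0 : G)
  rw [AddSubgroup.ne_bot_iff_exists_ne_zero]
  exact ⟨addEquivRangeNsmulHom hn g, by simpa using hg⟩

theorem exists_range_nsmulHom_ne_top (hG : ¬IsDivisibleGroup G) :
    ∃ n ≠ 0, (nsmulHom (G := G) n).range ≠ ⊤ := by
  simp only [IsDivisibleGroup, not_forall, not_exists] at hG
  obtain ⟨n, hn, x, hx⟩ := hG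
  refine ⟨n, hn.ne', fun h => ?_⟩
  obtain ⟨y, hy⟩ := AddMonoidHom.range_eq_top.1 h x
  exact hx y hy

theorem IsIFI.nonempty_addEquiv [IsAddTorsionFree G] (hG : IsIFI G) (hdiv : ¬IsDivisibleGroup G)
    {F : AddSubgroup G} (hF : IsFullyInvariant F) (hF₀ : F ≠ ⊥) (hF₁ : F ≠ ⊤) :
    Nonempty (F ≃+ G) := by
  have := hG.1
  obtain ⟨n, hn, hn₁⟩ := exists_range_nsmulHom_ne_top hdiv
  obtain ⟨e⟩ := hG.2 F _ hF (isFullyInvariant_range_nsmulHom n) hF₀ hF₁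
    (range_nsmulHom_ne_bot hn) hn₁
  exact ⟨e.trans (addEquivRangeNsmulHom hn).symm⟩

end

/-- Every torsion-free IFI-group is si-simple. -/
theorem statement19 {G : Type*} [AddCommGroup G] (htf : ∀ g : G, g ≠ 0 → ¬IsOfFinAddOrder g)
    (hifi : IsIFI G) : SiSimple G := by
  have : IsAddTorsionFree G := .of_not_isOfFinAddOrder fun g hg => htf g hg
  intro S hS
  rw [or_iff_not_imp_left]
  intro hS₀
  by_cases hdiv : IsDivisibleGroup G
  · have : DivisibleBy G ℕ :=
      divisibleByOfSMulRightSurj G ℕ fun hn x => hdiv _ (Nat.pos_of_ne_zero hn) x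
    have : DivisibleBy G ℤ := AddGroup.divisibleByIntOfDivisibleByNat G
    exact hS.eq_top_of_divisibleBy hS₀
  · by_contra hS₁
    obtain ⟨e⟩ := hifi.nonempty_addEquiv hdiv hS.isFullyInvariant hS₀ hS₁
    exact hS₁ (hS.eq_top_of_addEquiv e)
end
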